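/- In a finite graph with both directed and undirected edges (a chain graph), suppose every connected component of the undirected part is a complete graph and all vertices within a single such component have the same set of parents via directed edges. Then the moral graph of the closure of each chain component is a complete graph, and hence chordal. -/
import Mathlib


/-- `Cl D Uedge v0 a`: the vertex `a` belongs to the closure of the chain component of `v0`,
i.e. `a` is in the undirected-connected component of `v0` or `a` is a parent (via a directed
edge `D`) of some vertex of that component. -/
def Cl {V : Type*} (D Uedge : V → V → Prop) (v0 a : V) : Prop :=
  Relation.ReflTransGen Uedge v0 a ∨
    ∃ b, Relation.ReflTransGen Uedge v0 b ∧ D a b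

/-- Moral adjacency on the closure of the chain component of `v0`: two vertices are adjacent
if they are joined by an undirected edge, by a directed edge (in either direction, with
direction dropped), or if they have a common child in the chain component of `v0`. -/
def MoralAdj {V : Type*} (D Uedge : V → V → Prop) (v0 a b : V) : Prop :=
  Uedge a b ∨ D a b ∨ D b a ∨
    ∃ c, Relation.ReflTransGen Uedge v0 c ∧ D a c ∧ D b c

lemma rtg_symm {V : Type*} {Uedge : V → V → Prop}
    (hsymm : ∀ a b, Uedge a b → Uedge b a) {a b : V}
    (h : Relation.ReflTransGen Uedge a b) : Relation.ReflTransGen Uedge b a := by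
  induction h with
  | refl => exact Relation.ReflTransGen.refl
  | tail _ h2 ih => exact Relation.ReflTransGen.head (hsymm _ _ h2) ih

/-- In a finite chain graph in which every connected component of the undirected part is
complete and all vertices within one such component have the same set of parents, the moral
graph of the closure of each chain component is complete, and hence chordal (every cycle of
length at least 4 has a chord). -/
theorem stmt_17 {V : Type*} [Finite V] (D Uedge : V → V → Prop)
    (hsymm : ∀ a b, Uedge a b → Uedge b a)
    (hirr : ∀ a, ¬ Uedge a a)
    (hcomplete : ∀ a b, Relation.ReflTransGen Uedge a b → a ≠ b → Uedge a b)
    (hpar : ∀ a b w, Relation.ReflTransGen Uedge a b → (D w a ↔ D w b))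
    (v0 : V) :
    (∀ a b, Cl D Uedge v0 a → Cl D Uedge v0 b → a ≠ b → MoralAdj D Uedge v0 a b) ∧
    (∀ n : ℕ, 4 ≤ n → ∀ v : ZMod n → V, Function.Injective v →
      (∀ i, Cl D Uedge v0 (v i)) →
      (∀ i, MoralAdj D Uedge v0 (v i) (v (i + 1))) →
      ∃ i j : ZMod n, i ≠ j ∧ j ≠ i + 1 ∧ i ≠ j + 1 ∧ MoralAdj D Uedge v0 (v i) (v j)) := by
  have key : ∀ a b, Cl D Uedge v0 a → Cl D Uedge v0 b → a ≠ b → MoralAdj D Uedge v0 a b := by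
    rintro a b (ha | ⟨c, hc, hac⟩) (hb | ⟨c', hc', hbc'⟩) hab
    · exact Or.inl (hcomplete a b ((rtg_symm hsymm ha).trans hb) hab)
    · -- a in component, b parent of c'
      have : Relation.ReflTransGen Uedge c' a := (rtg_symm hsymm hc').trans ha
      exact Or.inr (Or.inr (Or.inl ((hpar c' a b this).mp hbc')))
    · have : Relation.ReflTransGen Uedge c b := (rtg_symm hsymm hc).trans hb
      exact Or.inr (Or.inl ((hpar c b a this).mp hac))
    · have : Relation.ReflTransGen Uedge c' c := (rtg_symm hsymm hc').trans hc
      exact Or.inr (Or.inr (Or.inr ⟨c, hc, hac, (hpar c' c b this).mp hbc'⟩))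
  refine ⟨key, ?_⟩
  intro n hn v hv hcl _
  haveI : NeZero n := ⟨by omega⟩
  have hval : ∀ m : ℕ, m < n → ((m : ZMod n)).val = m := fun m hm => ZMod.val_cast_of_lt hm
  have h02 : (0 : ZMod n) ≠ 2 := by
    intro h
    have := congrArg ZMod.val h
    rw [show ((2:ZMod n)) = ((2:ℕ):ZMod n) by push_cast; ring] at this
    rw [ZMod.val_zero, hval 2 (by omega)] at this
    omega
  have h21 : (2 : ZMod n) ≠ 0 + 1 := by
    intro h
    have := congrArg ZMod.val h
    rw [show ((2:ZMod n)) = ((2:ℕ):ZMod n) by push_cast; ring,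
        show ((0:ZMod n)+1) = ((1:ℕ):ZMod n) by push_cast; ring] at this
    rw [hval 2 (by omega), hval 1 (by omega)] at this
    omega
  have h03 : (0 : ZMod n) ≠ 2 + 1 := by
    intro h
    have := congrArg ZMod.val h
    rw [show ((2:ZMod n)+1) = ((3:ℕ):ZMod n) by push_cast; ring] at this
    rw [ZMod.val_zero, hval 3 (by omega)] at this
    omega
  exact ⟨0, 2, h02, h21, h03, key _ _ (hcl 0) (hcl 2) (fun h => h02 (hv h))⟩
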